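/- arXiv:1502.03316 — 3 statements merged into one kernel-verified Lean document; each statement's English description precedes it below -/
import Mathlib

section
/- Let G = (V,E) be a finite simple graph on vertex set {1,...,n} with m edges whose minimum vertex cover has size k ≥ 1, and for each edge e = {i,j} let x_e = e_i + e_j ∈ ℝ^n. Then there exist k center points c_1, ..., c_k ∈ ℝ^n such that ∑_{e∈E} min_{1≤i≤k} ‖x_e − c_i‖² ≤ m − k. -/
/-!
Assign every edge to one of its endpoints in the minimum cover `S`. Minimality makes each
`v ∈ S` the only cover vertex of some edge, so every vertex of `S` receives an edge. The edges
assigned to `v` form a star: their points satisfy `‖x_e‖² = 2` and `⟪x_e, x_f⟫ = 1` for `e ≠ f`,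
so `‖∑ x_e‖² = m(m+1)` and the star costs `2m - m(m+1)/m = m - 1` around its centroid. Summing
over the `k` nonempty stars gives `|E| - k`.
-/

/-- The point `x_e = e_i + e_j ∈ ℝ^n` associated to the edge `e = {i,j}`. -/
noncomputable def edgePoint {n : ℕ} (e : Sym2 (Fin n)) : EuclideanSpace ℝ (Fin n) :=
  Sym2.lift ⟨fun i j => EuclideanSpace.single i (1 : ℝ) + EuclideanSpace.single j 1,
    fun _ _ => add_comm _ _⟩ e

/-- `S` is a vertex cover of the simple graph `G`: every edge has an endpoint in `S`. -/
def IsVertexCover {V : Type*} (G : SimpleGraph V) (S : Finset V) : Prop :=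
  ∀ ⦃u v : V⦄, G.Adj u v → u ∈ S ∨ v ∈ S

open Finset

theorem sum_norm_sub_centroid_sq {E α : Type*} [NormedAddCommGroup E] [InnerProductSpace ℝ E]
    (P : Finset α) (x : α → E) :
    ∑ p ∈ P, ‖x p - (#P : ℝ)⁻¹ • ∑ q ∈ P, x q‖ ^ 2
      = ∑ p ∈ P, ‖x p‖ ^ 2 - (#P : ℝ)⁻¹ * ‖∑ p ∈ P, x p‖ ^ 2 := by
  rcases P.eq_empty_or_nonempty with rfl | hP
  · simp
  have hm : (#P : ℝ) ≠ 0 := by simpa using hP.ne_empty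
  simp only [norm_sub_sq_real, sum_add_distrib, sum_sub_distrib, real_inner_smul_right,
    ← mul_sum, ← sum_inner, real_inner_self_eq_norm_sq, norm_smul, sum_const, nsmul_eq_mul,
    Real.norm_eq_abs, abs_inv, Nat.abs_cast, mul_pow]
  field_simp
  ring

theorem sum_inf'_le_sum_fiberwise {α ι β : Type*} [Fintype ι] [DecidableEq ι]
    [AddCommMonoid β] [LinearOrder β] [IsOrderedAddMonoid β]
    (hι : (univ : Finset ι).Nonempty) (P : Finset α) (f : α → ι → β) (a : α → ι) :
    ∑ p ∈ P, univ.inf' hι (f p) ≤ ∑ i, ∑ p ∈ P with a p = i, f p i := by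
  rw [← sum_fiberwise P a (fun p => univ.inf' hι (f p))]
  exact sum_le_sum fun i _ => sum_le_sum fun p _ => inf'_le _ (mem_univ i)

section EdgePoint

variable {n : ℕ}

theorem edgePoint_mk (i j : Fin n) :
    edgePoint s(i, j) = EuclideanSpace.single i (1 : ℝ) + EuclideanSpace.single j 1 :=
  rfl

theorem inner_edgePoint_of_mem {v : Fin n} {e e' : Sym2 (Fin n)} (hv : v ∈ e) (hv' : v ∈ e')
    (he : ¬e.IsDiag) (he' : ¬e'.IsDiag) :
    inner ℝ (edgePoint e) (edgePoint e') = if e = e' then 2 else 1 := by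
  obtain ⟨a, rfl⟩ := Sym2.mem_iff_exists.mp hv
  obtain ⟨b, rfl⟩ := Sym2.mem_iff_exists.mp hv'
  rw [Sym2.mk_isDiag_iff] at he he'
  simp only [edgePoint_mk, inner_add_left, inner_add_right, EuclideanSpace.inner_single_left,
    PiLp.single_apply, Sym2.congr_right]
  simp [Ne.symm he, he']
  split_ifs <;> norm_num

theorem norm_sum_edgePoint_sq_of_mem {v : Fin n} {F : Finset (Sym2 (Fin n))}
    (hv : ∀ e ∈ F, v ∈ e) (hF : ∀ e ∈ F, ¬e.IsDiag) :
    ‖∑ e ∈ F, edgePoint e‖ ^ 2 = #F * (#F + 1) := by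
  have hrow : ∀ e ∈ F, ∑ e' ∈ F, inner ℝ (edgePoint e) (edgePoint e') = #F + 1 := by
    intro e he
    have hsplit : ∀ e' ∈ F, inner ℝ (edgePoint e) (edgePoint e')
        = 1 + if e = e' then 1 else 0 := fun e' he' => by
      rw [inner_edgePoint_of_mem (hv e he) (hv e' he') (hF e he) (hF e' he')]
      split_ifs <;> norm_num
    rw [sum_congr rfl hsplit, sum_add_distrib, sum_ite_eq, if_pos he]
    simp [add_comm]
  rw [← real_inner_self_eq_norm_sq, sum_inner, sum_congr rfl fun e he => by
    rw [inner_sum, hrow e he]]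
  simp only [sum_const, nsmul_eq_mul]

theorem sum_norm_edgePoint_sub_centroid_sq {v : Fin n} {F : Finset (Sym2 (Fin n))}
    (hFne : F.Nonempty) (hv : ∀ e ∈ F, v ∈ e) (hF : ∀ e ∈ F, ¬e.IsDiag) :
    ∑ e ∈ F, ‖edgePoint e - (#F : ℝ)⁻¹ • ∑ e' ∈ F, edgePoint e'‖ ^ 2 = #F - 1 := by
  have hnorm : ∀ e ∈ F, ‖edgePoint e‖ ^ 2 = 2 := fun e he => by
    rw [← real_inner_self_eq_norm_sq, inner_edgePoint_of_mem (hv e he) (hv e he) (hF e he)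
      (hF e he), if_pos rfl]
  have hm : (#F : ℝ) ≠ 0 := by simpa using hFne.ne_empty
  rw [sum_norm_sub_centroid_sq, sum_congr rfl hnorm, sum_const, nsmul_eq_mul,
    norm_sum_edgePoint_sq_of_mem hv hF]
  field_simp
  ring

end EdgePoint

section VertexCover

variable {V : Type*} {G : SimpleGraph V} {S : Finset V}

theorem IsVertexCover.exists_mem_of_mem_edgeSet (hS : IsVertexCover G S) {e : Sym2 V}
    (he : e ∈ G.edgeSet) : ∃ v ∈ e, v ∈ S := by
  induction e using Sym2.ind with
  | h u w =>
    rcases hS he with hu | hw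
    · exact ⟨u, Sym2.mem_mk_left u w, hu⟩
    · exact ⟨w, Sym2.mem_mk_right u w, hw⟩

theorem exists_edge_covered_only_by [DecidableEq V]
    (hmin : ∀ T : Finset V, IsVertexCover G T → #S ≤ #T) {v : V} (hv : v ∈ S) :
    ∃ e ∈ G.edgeSet, ∀ w ∈ e, w ∈ S → w = v := by
  have hnot : ¬IsVertexCover G (S.erase v) := fun hcov =>
    (card_erase_lt_of_mem hv).not_ge (hmin _ hcov)
  simp only [IsVertexCover, not_forall, mem_erase, not_or, not_and_or, not_not] at hnot
  obtain ⟨u, w, huw, hu, hw⟩ := hnot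
  refine ⟨s(u, w), huw, fun x hx hxS => ?_⟩
  rcases Sym2.mem_iff.mp hx with rfl | rfl
  · exact hu.resolve_right (not_not.mpr hxS)
  · exact hw.resolve_right (not_not.mpr hxS)

theorem exists_surjective_cover_assignment {ι : Type*} [Nonempty ι] (σ : ι ≃ S)
    (hS : IsVertexCover G S) (hmin : ∀ T : Finset V, IsVertexCover G T → #S ≤ #T) :
    ∃ a : Sym2 V → ι, (∀ e ∈ G.edgeSet, (σ (a e) : V) ∈ e) ∧ ∀ i, ∃ e ∈ G.edgeSet, a e = i := by
  classical
  have hchoice : ∀ e : Sym2 V, ∃ i, e ∈ G.edgeSet → (σ i : V) ∈ e := fun e => by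
    by_cases he : e ∈ G.edgeSet
    · obtain ⟨v, hve, hvS⟩ := hS.exists_mem_of_mem_edgeSet he
      exact ⟨σ.symm ⟨v, hvS⟩, fun _ => by simpa using hve⟩
    · exact ⟨Classical.arbitrary ι, fun h => absurd h he⟩
  choose a ha using hchoice
  refine ⟨a, ha, fun i => ?_⟩
  obtain ⟨e, he, honly⟩ := exists_edge_covered_only_by hmin (σ i).2
  exact ⟨e, he, σ.injective (Subtype.ext (honly _ (ha e he) (σ (a e)).2))⟩

end VertexCover

/-- If the minimum vertex cover of a simple graph `G` on `{1,…,n}` with `m` edges has size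
`k ≥ 1`, then there exist `k` centers `c_1, …, c_k ∈ ℝ^n` with k-means cost
`∑_{e∈E} min_i ‖x_e − c_i‖² ≤ m − k`. -/
theorem exists_centers_kmeans_cost_le {n : ℕ} (G : SimpleGraph (Fin n))
    [DecidableRel G.Adj] (k : ℕ) (hk : 1 ≤ k)
    (S : Finset (Fin n)) (hS : IsVertexCover G S) (hcard : S.card = k)
    (hmin : ∀ T : Finset (Fin n), IsVertexCover G T → k ≤ T.card) :
    ∃ c : Fin k → EuclideanSpace ℝ (Fin n),
      ∑ e ∈ G.edgeFinset,
          (Finset.univ.inf' ⟨⟨0, hk⟩, Finset.mem_univ _⟩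
            fun i : Fin k => ‖edgePoint e - c i‖ ^ 2)
        ≤ (G.edgeFinset.card : ℝ) - k := by
  have : Nonempty (Fin k) := ⟨⟨0, hk⟩⟩
  let σ : Fin k ≃ S := (S.equivFinOfCardEq hcard).symm
  obtain ⟨a, hcover, hsurj⟩ := exists_surjective_cover_assignment σ hS (hcard ▸ hmin)
  set cluster : Fin k → Finset (Sym2 (Fin n)) := fun i => {e ∈ G.edgeFinset | a e = i}
  have hstar : ∀ i, ∑ e ∈ cluster i,
      ‖edgePoint e - (#(cluster i) : ℝ)⁻¹ • ∑ e' ∈ cluster i, edgePoint e'‖ ^ 2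
        = #(cluster i) - 1 := fun i => by
    refine sum_norm_edgePoint_sub_centroid_sq (v := σ i)
      ?_ (fun e he => ?_) (fun e he => ?_)
    · obtain ⟨e, he, rfl⟩ := hsurj i
      exact ⟨e, mem_filter.mpr ⟨G.mem_edgeFinset.mpr he, rfl⟩⟩
    · obtain ⟨heG, rfl⟩ := mem_filter.mp he
      exact hcover e (G.mem_edgeFinset.mp heG)
    · exact G.not_isDiag_of_mem_edgeSet (G.mem_edgeFinset.mp (mem_filter.mp he).1)
  refine ⟨fun i => (#(cluster i) : ℝ)⁻¹ • ∑ e ∈ cluster i, edgePoint e, ?_⟩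
  calc _ ≤ ∑ i, ∑ e ∈ cluster i, _ := sum_inf'_le_sum_fiberwise _ _ _ a
    _ = ∑ i, ((#(cluster i) : ℝ) - 1) := sum_congr rfl fun i _ => hstar i
    _ = _ := by
      rw [sum_sub_distrib, ← Nat.cast_sum, ← card_eq_sum_card_fiberwise fun e _ => mem_univ (a e)]
      simp
end

section
/- Let G = (V,E) be a finite simple triangle-free graph on vertex set {1,...,n} with m edges, let δ with 0 ≤ δ ≤ 1, let k ≥ 1, and for each edge e = {i,j} let x_e = e_i + e_j ∈ ℝ^n. If there exist k points c_1, ..., c_k ∈ ℝ^n with ∑_{e∈E} min_{1≤i≤k} ‖x_e − c_i‖² ≤ m − (1 − δ)·k, then G has a vertex cover of size at most (1 + 3δ)·k. -/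
/-!
Send every edge to a nearest centre; this splits `G` into `k` triangle-free subgraphs, and it
suffices to cover a subgraph `H` with `m` edges and centre `c` by at most
`4 + 3 ∑_{e ∈ H} (‖x_e - c‖² - 1)` vertices.

Analytically, the mean of the points `x_e` is `d / m`, where `d` is the degree vector of `H`,
so `m ∑_e ‖x_e - c‖² ≥ m ∑_e ‖x_e‖² - ‖d‖² = 2m² - ∑_v d_v²`.

Combinatorially, pick an edge `uw` maximising `d_u + d_w`; then `∑_v d_v² ≤ m (d_u + d_w)`.
If some `t ≥ 1` edges avoid `u` and `w`, then `d_u + d_w = m + 1 - t` and `u`, `w` together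
with one endpoint of each of these edges is a cover. Otherwise `d_u + d_w = m + 1`, every other
vertex has degree at most one (a second neighbour would close a triangle with `uw`), and the
neighbourhood of the endpoint of smaller degree is a cover. In both cases the cover `S`
satisfies `|S| m + 3 ∑_v d_v² ≤ m + 3m(m + 1)`, which together with the analytic bound gives
the claim.
-/

open Finset

lemma card_mul_sum_norm_sq_sub_norm_sum_sq_le {ι E : Type*} [NormedAddCommGroup E]
    [InnerProductSpace ℝ E] (s : Finset ι) (x : ι → E) (c : E) :
    #s * ∑ i ∈ s, ‖x i‖ ^ 2 - ‖∑ i ∈ s, x i‖ ^ 2 ≤ #s * ∑ i ∈ s, ‖x i - c‖ ^ 2 := by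
  have hexpand : ∑ i ∈ s, ‖x i - c‖ ^ 2
      = ∑ i ∈ s, ‖x i‖ ^ 2 - 2 * inner ℝ c (∑ i ∈ s, x i) + #s * ‖c‖ ^ 2 := by
    simp only [norm_sub_sq_real, sum_add_distrib, sum_sub_distrib, inner_sum, mul_sum,
      sum_const, nsmul_eq_mul, real_inner_comm c]
  have hsq : 0 ≤ ‖(#s : ℝ) • c - ∑ i ∈ s, x i‖ ^ 2 := by positivity
  rw [norm_sub_sq_real, norm_smul, inner_smul_left, RCLike.norm_natCast, conj_trivial] at hsq
  rw [hexpand]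
  nlinarith

namespace SimpleGraph

variable {V : Type*} [Fintype V]

section Degrees

variable (H : SimpleGraph V) [DecidableRel H.Adj]

lemma sum_dart_fst [DecidableEq V] {M : Type*} [AddCommMonoid M] (f : V → M) :
    ∑ d : H.Dart, f d.fst = ∑ v, H.degree v • f v := by
  rw [← sum_fiberwise' univ (fun d : H.Dart => d.fst) f]
  simp only [sum_const, dart_fst_fiber_card_eq_degree]

lemma sum_dart_snd {M : Type*} [AddCommMonoid M] (f : V → M) :
    ∑ d : H.Dart, f d.snd = ∑ d : H.Dart, f d.fst :=
  Fintype.sum_equiv Dart.symm_involutive.toPerm _ _ fun _ => rfl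

lemma two_mul_sum_degree_sq :
    2 * ∑ v, H.degree v ^ 2 = ∑ d : H.Dart, (H.degree d.fst + H.degree d.snd) := by
  classical
  rw [sum_add_distrib, H.sum_dart_snd fun v => H.degree v, H.sum_dart_fst fun v => H.degree v]
  simp only [smul_eq_mul, sq]
  ring

lemma sum_degree_sq_le_card_edgeFinset_mul {M : ℕ}
    (hM : ∀ d : H.Dart, H.degree d.fst + H.degree d.snd ≤ M) :
    ∑ v, H.degree v ^ 2 ≤ #H.edgeFinset * M := by
  have h := H.two_mul_sum_degree_sq ▸ sum_le_sum fun d (_ : d ∈ univ) => hM d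
  rw [sum_const, card_univ, dart_card_eq_twice_card_edges, smul_eq_mul] at h
  linarith

end Degrees

variable [DecidableEq V] {H : SimpleGraph V} [DecidableRel H.Adj] {u w : V}

lemma card_incidenceFinset_union_add_one (huw : H.Adj u w) :
    #(H.incidenceFinset u ∪ H.incidenceFinset w) + 1 = H.degree u + H.degree w := by
  have hinter : H.incidenceFinset u ∩ H.incidenceFinset w = {s(u, w)} := by
    rw [← coe_inj, coe_inter, coe_incidenceFinset, coe_incidenceFinset, coe_singleton,
      H.incidenceSet_inter_incidenceSet_of_adj huw]
  rw [← card_incidenceFinset_eq_degree, ← card_incidenceFinset_eq_degree,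
    ← card_union_add_card_inter, hinter, card_singleton]

section Star

variable (huw : H.Adj u w) (hstar : ∀ e ∈ H.edgeSet, u ∈ e ∨ w ∈ e)
include huw hstar

lemma degree_le_one_of_forall_mem (hH : H.CliqueFree 3) {v : V} (hvu : v ≠ u) (hvw : v ≠ w) :
    H.degree v ≤ 1 := by
  have hnbr : ∀ a, H.Adj v a → a = u ∨ a = w := fun a hva => by
    rcases hstar s(v, a) hva with h | h <;> rcases Sym2.mem_iff.mp h with h | h
    exacts [absurd h.symm hvu, .inl h.symm, absurd h.symm hvw, .inr h.symm]
  have htriangle : ¬(H.Adj v u ∧ H.Adj v w) := fun ⟨hvu', hvw'⟩ =>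
    hH {u, w, v} (is3Clique_triple_iff.mpr ⟨huw, hvu'.symm, hvw'.symm⟩)
  rw [← card_neighborFinset_eq_degree, card_le_one]
  intro a ha b hb
  rw [mem_neighborFinset] at ha hb
  rcases hnbr a ha with rfl | rfl <;> rcases hnbr b hb with rfl | rfl
  exacts [rfl, absurd ⟨ha, hb⟩ htriangle, absurd ⟨hb, ha⟩ htriangle, rfl]

lemma degree_add_degree_of_forall_mem : H.degree u + H.degree w = #H.edgeFinset + 1 := by
  have hunion : H.incidenceFinset u ∪ H.incidenceFinset w = H.edgeFinset := by
    refine (union_subset (H.incidenceFinset_subset u) (H.incidenceFinset_subset w)).antisymm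
      fun e he => ?_
    rw [mem_edgeFinset] at he
    simp only [mem_union, mem_incidenceFinset]
    exact (hstar e he).imp (⟨he, ·⟩) (⟨he, ·⟩)
  rw [← card_incidenceFinset_union_add_one huw, hunion]

lemma sum_degree_sq_add_le_of_forall_mem (hH : H.CliqueFree 3) :
    ∑ v, H.degree v ^ 2 + (H.degree u + H.degree w)
      ≤ H.degree u ^ 2 + H.degree w ^ 2 + 2 * #H.edgeFinset := by
  have hrest : ∑ v ∈ {u, w}ᶜ, H.degree v ^ 2 ≤ ∑ v ∈ {u, w}ᶜ, H.degree v := by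
    refine sum_le_sum fun v hv => ?_
    simp only [mem_compl, mem_insert, mem_singleton, not_or] at hv
    have := degree_le_one_of_forall_mem huw hstar hH hv.1 hv.2
    interval_cases H.degree v <;> rfl
  rw [← sum_degrees_eq_twice_card_edges, ← sum_add_sum_compl {u, w},
    ← sum_add_sum_compl {u, w} (fun v => H.degree v), sum_pair huw.ne, sum_pair huw.ne]
  omega

end Star

lemma sum_sum_edgeFinset_deleteEdges {ι M : Type*} [Fintype ι] [DecidableEq ι]
    [AddCommMonoid M] (G : SimpleGraph V) [DecidableRel G.Adj] (σ : Sym2 V → ι)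
    (f : ι → Sym2 V → M) :
    ∑ i, ∑ e ∈ (G.deleteEdges {e | σ e ≠ i}).edgeFinset, f i e
      = ∑ e ∈ G.edgeFinset, f (σ e) e := by
  rw [← sum_fiberwise G.edgeFinset σ]
  refine sum_congr rfl fun i _ => ?_
  have hfiber : (G.deleteEdges {e | σ e ≠ i}).edgeFinset = {e ∈ G.edgeFinset | σ e = i} := by
    ext e
    simp
  rw [hfiber]
  exact sum_congr rfl fun e he => by rw [(mem_filter.mp he).2]

end SimpleGraph

section Cover

variable {V : Type*} {H : SimpleGraph V}

lemma isVertexCover_of_forall_edge {S : Finset V} (hS : ∀ e ∈ H.edgeSet, ∃ v ∈ S, v ∈ e) :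
    IsVertexCover H S := fun x y hxy => by
  obtain ⟨v, hv, hve⟩ := hS s(x, y) hxy
  rcases Sym2.mem_iff.mp hve with rfl | rfl
  exacts [.inl hv, .inr hv]

lemma isVertexCover_biUnion_deleteEdges {ι : Type*} [Fintype ι] [DecidableEq V]
    (σ : Sym2 V → ι) {S : ι → Finset V}
    (hS : ∀ i, IsVertexCover (H.deleteEdges {e | σ e ≠ i}) (S i)) :
    IsVertexCover H (univ.biUnion S) := fun x y hxy => by
  have hxy' : (H.deleteEdges {e | σ e ≠ σ s(x, y)}).Adj x y := by simpa using hxy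
  exact (hS _ hxy').imp (subset_biUnion_of_mem S (mem_univ _) ·)
    (subset_biUnion_of_mem S (mem_univ _) ·)

lemma isVertexCover_neighborFinset_of_forall_mem {u w : V} [Fintype (H.neighborSet u)]
    (huw : H.Adj u w) (hstar : ∀ e ∈ H.edgeSet, u ∈ e ∨ w ∈ e) :
    IsVertexCover H (H.neighborFinset u) := fun x y hxy => by
  rw [SimpleGraph.mem_neighborFinset, SimpleGraph.mem_neighborFinset]
  rcases hstar s(x, y) hxy with h | h <;> rcases Sym2.mem_iff.mp h with rfl | rfl
  exacts [.inr hxy, .inl hxy.symm, .inl huw, .inr huw]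

variable [Fintype V] [DecidableEq V] [DecidableRel H.Adj] {u w : V}

lemma exists_isVertexCover_of_forall_mem (hH : H.CliqueFree 3) (huw : H.Adj u w)
    (hstar : ∀ e ∈ H.edgeSet, u ∈ e ∨ w ∈ e) :
    ∃ S : Finset V, IsVertexCover H S ∧
      #S * #H.edgeFinset + 3 * ∑ v, H.degree v ^ 2
        ≤ #H.edgeFinset + 3 * #H.edgeFinset * (#H.edgeFinset + 1) := by
  wlog hle : H.degree u ≤ H.degree w generalizing u w
  · exact this huw.symm (fun e he => (hstar e he).symm) (by omega)
  refine ⟨_, isVertexCover_neighborFinset_of_forall_mem huw hstar, ?_⟩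
  have hsum := SimpleGraph.degree_add_degree_of_forall_mem huw hstar
  have hT := SimpleGraph.sum_degree_sq_add_le_of_forall_mem huw hstar hH
  have hu : 1 ≤ H.degree u := H.degree_pos_iff_exists_adj u |>.mpr ⟨w, huw⟩
  rw [H.card_neighborFinset_eq_degree]
  rcases hu.eq_or_lt with hu1 | hu2
  · rw [← hu1] at hsum hT ⊢
    zify at *
    nlinarith
  · zify at *
    -- with `m = d_u + d_w - 1` the goal reduces to `(d_u - 1) (6 d_u - 5 m) ≤ 0`
    nlinarith [mul_nonneg (by linarith : (0 : ℤ) ≤ H.degree u - 1)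
      (by linarith : (0 : ℤ) ≤ 6 * (H.degree w - 1) - #H.edgeFinset)]

lemma exists_isVertexCover_of_not_forall_mem (huw : H.Adj u w)
    (hstar : ¬∀ e ∈ H.edgeSet, u ∈ e ∨ w ∈ e)
    (hT : ∑ v, H.degree v ^ 2 ≤ #H.edgeFinset * (H.degree u + H.degree w)) :
    ∃ S : Finset V, IsVertexCover H S ∧
      #S * #H.edgeFinset + 3 * ∑ v, H.degree v ^ 2
        ≤ #H.edgeFinset + 3 * #H.edgeFinset * (#H.edgeFinset + 1) := by
  set B := H.edgeFinset \ (H.incidenceFinset u ∪ H.incidenceFinset w)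
  have hmemB : ∀ e ∈ H.edgeSet, ¬(u ∈ e ∨ w ∈ e) → e ∈ B := fun e he hne => by
    simpa [B, SimpleGraph.mem_incidenceFinset, SimpleGraph.incidenceSet, he] using hne
  have hB : 1 ≤ #B := card_pos.mpr <| by
    by_contra hempty
    exact hstar fun e he => by_contra fun hne => hempty ⟨e, hmemB e he hne⟩
  have hcardB : H.degree u + H.degree w + #B = #H.edgeFinset + 1 := by
    have hsplit : #B + #(H.incidenceFinset u ∪ H.incidenceFinset w) = #H.edgeFinset :=
      card_sdiff_add_card_eq_card
        (union_subset (H.incidenceFinset_subset u) (H.incidenceFinset_subset w))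
    have := SimpleGraph.card_incidenceFinset_union_add_one huw
    omega
  refine ⟨{u, w} ∪ B.image fun e => e.out.1, isVertexCover_of_forall_edge fun e he => ?_, ?_⟩
  · by_cases huwe : u ∈ e ∨ w ∈ e
    · rcases huwe with h | h
      exacts [⟨u, by simp, h⟩, ⟨w, by simp, h⟩]
    · exact ⟨e.out.1, mem_union_right _ (mem_image_of_mem _ (hmemB e he huwe)), e.out_fst_mem⟩
  · have hcard : #({u, w} ∪ B.image fun e => e.out.1) ≤ 2 + #B :=
      calc _ ≤ #({u, w} : Finset V) + #B :=
            (card_union_le _ _).trans (Nat.add_le_add_left card_image_le _)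
        _ ≤ 2 + #B := Nat.add_le_add_right card_le_two _
    zify at *
    nlinarith [mul_nonneg (by positivity : (0 : ℤ) ≤ #H.edgeFinset)
      (by linarith : (0 : ℤ) ≤ 2 * #B - 1)]

theorem exists_isVertexCover_card_mul_add_le (hH : H.CliqueFree 3) (hE : 0 < #H.edgeFinset) :
    ∃ S : Finset V, IsVertexCover H S ∧
      #S * #H.edgeFinset + 3 * ∑ v, H.degree v ^ 2
        ≤ #H.edgeFinset + 3 * #H.edgeFinset * (#H.edgeFinset + 1) := by
  have : Nonempty H.Dart := Fintype.card_pos_iff.mp <| by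
    rw [H.dart_card_eq_twice_card_edges]
    omega
  obtain ⟨d, -, hd⟩ := exists_max_image univ (fun d : H.Dart => H.degree d.fst + H.degree d.snd)
    univ_nonempty
  by_cases hstar : ∀ e ∈ H.edgeSet, d.fst ∈ e ∨ d.snd ∈ e
  · exact exists_isVertexCover_of_forall_mem hH d.adj hstar
  · exact exists_isVertexCover_of_not_forall_mem d.adj hstar
      (H.sum_degree_sq_le_card_edgeFinset_mul fun d' => hd d' (mem_univ _))

end Cover

section EdgePoint

variable {n : ℕ}

lemma edgePoint_apply {e : Sym2 (Fin n)} (he : ¬e.IsDiag) (v : Fin n) :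
    edgePoint e v = if v ∈ e then 1 else 0 := by
  induction e using Sym2.ind with
  | h u w =>
    have huw : u ≠ w := by simpa using he
    by_cases hu : v = u <;> by_cases hw : v = w <;> simp_all [edgePoint]

lemma norm_edgePoint_sq {e : Sym2 (Fin n)} (he : ¬e.IsDiag) : ‖edgePoint e‖ ^ 2 = 2 := by
  induction e using Sym2.ind with
  | h u w =>
    have huw : u ≠ w := by simpa using he
    simp [edgePoint, norm_add_sq_real, EuclideanSpace.inner_single_left, huw]
    norm_num

variable (H : SimpleGraph (Fin n)) [DecidableRel H.Adj]

lemma sum_edgePoint_apply (v : Fin n) :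
    (∑ e ∈ H.edgeFinset, edgePoint e) v = H.degree v := by
  rw [← H.card_incidenceFinset_eq_degree, H.incidenceFinset_eq_filter, WithLp.ofLp_sum,
    Finset.sum_apply, card_filter, Nat.cast_sum]
  refine sum_congr rfl fun e he => ?_
  rw [edgePoint_apply (H.not_isDiag_of_mem_edgeSet (H.mem_edgeFinset.mp he))]
  split_ifs <;> simp

lemma norm_sum_edgePoint_sq :
    ‖∑ e ∈ H.edgeFinset, edgePoint e‖ ^ 2 = ∑ v, (H.degree v : ℝ) ^ 2 := by
  simp [EuclideanSpace.norm_sq_eq, sum_edgePoint_apply]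

lemma two_mul_sq_sub_sum_degree_sq_le (c : EuclideanSpace ℝ (Fin n)) :
    2 * (#H.edgeFinset : ℝ) ^ 2 - ∑ v, (H.degree v : ℝ) ^ 2
      ≤ #H.edgeFinset * ∑ e ∈ H.edgeFinset, ‖edgePoint e - c‖ ^ 2 := by
  have hnorm : ∑ e ∈ H.edgeFinset, ‖edgePoint e‖ ^ 2 = 2 * #H.edgeFinset := by
    rw [sum_congr rfl fun e he =>
      norm_edgePoint_sq (H.not_isDiag_of_mem_edgeSet (H.mem_edgeFinset.mp he))]
    simp [mul_comm]
  have h := card_mul_sum_norm_sq_sub_norm_sum_sq_le H.edgeFinset edgePoint c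
  rw [hnorm, norm_sum_edgePoint_sq] at h
  linarith

theorem exists_isVertexCover_card_le_sum_norm_sub_sq (hH : H.CliqueFree 3)
    (c : EuclideanSpace ℝ (Fin n)) :
    ∃ S : Finset (Fin n), IsVertexCover H S ∧
      (#S : ℝ) ≤ 4 + 3 * ∑ e ∈ H.edgeFinset, (‖edgePoint e - c‖ ^ 2 - 1) := by
  rcases (#H.edgeFinset).eq_zero_or_pos with hE | hE
  · refine ⟨∅, fun u v huv => ?_, by simp [card_eq_zero.mp hE]⟩
    simpa [card_eq_zero.mp hE] using H.mem_edgeFinset.mpr (H.mem_edgeSet.mpr huv)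
  obtain ⟨S, hS, hcard⟩ := exists_isVertexCover_card_mul_add_le hH hE
  refine ⟨S, hS, le_of_mul_le_mul_right ?_ (Nat.cast_pos.mpr hE : (0 : ℝ) < #H.edgeFinset)⟩
  have hcost := two_mul_sq_sub_sum_degree_sq_le H c
  rw [sum_sub_distrib, sum_const, nsmul_one]
  have hcard' : (#S : ℝ) * #H.edgeFinset + 3 * ∑ v, (H.degree v : ℝ) ^ 2
      ≤ #H.edgeFinset + 3 * #H.edgeFinset * (#H.edgeFinset + 1) := by exact_mod_cast hcard
  nlinarith

end EdgePoint

theorem vertexCover_of_cheap_kmeans_general {n : ℕ} (G : SimpleGraph (Fin n))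
    [DecidableRel G.Adj] (hG : G.CliqueFree 3)
    (δ : ℝ) (k : ℕ) (hk : 1 ≤ k)
    (c : Fin k → EuclideanSpace ℝ (Fin n))
    (hcost : ∑ e ∈ G.edgeFinset,
        (Finset.univ.inf' ⟨⟨0, hk⟩, Finset.mem_univ _⟩
          fun i : Fin k => ‖edgePoint e - c i‖ ^ 2)
      ≤ (G.edgeFinset.card : ℝ) - (1 - δ) * k) :
    ∃ S : Finset (Fin n), IsVertexCover G S ∧ (S.card : ℝ) ≤ (1 + 3 * δ) * k := by
  choose σ hσ using fun e : Sym2 (Fin n) =>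
    (exists_mem_eq_inf' ⟨⟨0, hk⟩, mem_univ _⟩ fun i : Fin k => ‖edgePoint e - c i‖ ^ 2).imp
      fun _ => And.right
  choose S hS hScard using fun i =>
    exists_isVertexCover_card_le_sum_norm_sub_sq (G.deleteEdges {e | σ e ≠ i})
      (hG.anti (G.deleteEdges_le _)) (c i)
  refine ⟨univ.biUnion S, isVertexCover_biUnion_deleteEdges σ hS, ?_⟩
  calc (#(univ.biUnion S) : ℝ) ≤ ∑ i, (#(S i) : ℝ) := by exact_mod_cast card_biUnion_le
    _ ≤ ∑ i, (4 + 3 * ∑ e ∈ (G.deleteEdges {e | σ e ≠ i}).edgeFinset,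
          (‖edgePoint e - c i‖ ^ 2 - 1)) := sum_le_sum fun i _ => hScard i
    _ = 4 * k + 3 * ∑ e ∈ G.edgeFinset, (‖edgePoint e - c (σ e)‖ ^ 2 - 1) := by
      rw [sum_add_distrib, ← mul_sum, G.sum_sum_edgeFinset_deleteEdges σ
        fun i e => ‖edgePoint e - c i‖ ^ 2 - 1]
      simp [mul_comm]
    _ ≤ (1 + 3 * δ) * k := by
      rw [sum_sub_distrib, ← sum_congr rfl fun e _ => hσ e]
      simp only [sum_const, nsmul_eq_mul, mul_one]
      linarith

/-- If a triangle-free simple graph `G` on `{1,…,n}` with `m` edges admits `k ≥ 1` centers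
`c_1, …, c_k ∈ ℝ^n` of k-means cost `∑_{e∈E} min_i ‖x_e − c_i‖² ≤ m − (1 − δ)·k` for some
`0 ≤ δ ≤ 1`, then `G` has a vertex cover of size at most `(1 + 3δ)·k`. -/
theorem vertexCover_of_cheap_kmeans {n : ℕ} (G : SimpleGraph (Fin n))
    [DecidableRel G.Adj] (hG : G.CliqueFree 3)
    (δ : ℝ) (hδ0 : 0 ≤ δ) (hδ1 : δ ≤ 1) (k : ℕ) (hk : 1 ≤ k)
    (c : Fin k → EuclideanSpace ℝ (Fin n))
    (hcost : ∑ e ∈ G.edgeFinset,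
        (Finset.univ.inf' ⟨⟨0, hk⟩, Finset.mem_univ _⟩
          fun i : Fin k => ‖edgePoint e - c i‖ ^ 2)
      ≤ (G.edgeFinset.card : ℝ) - (1 - δ) * k) :
    ∃ S : Finset (Fin n), IsVertexCover G S ∧ (S.card : ℝ) ≤ (1 + 3 * δ) * k :=
  vertexCover_of_cheap_kmeans_general G hG δ k hk c hcost
end

section
/- Let H be a finite simple d-regular graph on n vertices with adjacency matrix A_H satisfying |pᵀ A_H p| ≤ λ·‖p‖² for every p ∈ ℝ^n orthogonal to the all-ones vector, where 0 < λ < d/4. Let B be a nonempty set of vertices of H with |B| ≤ (λ/d)·n, and let N(B) denote the set of all vertices of H having a neighbor in B. Then |N(B)| ≥ (d/(2λ))·|B|. -/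
/-! Centre the indicator vectors of `B` and `N(B)` to mean zero, getting `x` and `y`. Every edge
at `B` ends in `N(B)`, so `xᵀ A y = d|B| - d|B||N(B)|/n`. Polarising the spectral bound gives
`xᵀ A y ≤ (λ/2)(‖x‖² + ‖y‖²) ≤ (λ/2)(|B| + |N(B)|)`, and `|B| ≤ λn/d` bounds the correction
term by `λ|N(B)|`. Hence `d|B| ≤ (λ/2)|B| + (3λ/2)|N(B)|`, which for `λ < d/4` gives
`|N(B)| ≥ d|B|/(2λ)`. -/

open Matrix Finset

theorem Matrix.IsSymm.dotProduct_mulVec_comm {ι R : Type*} [Fintype ι] [CommSemiring R]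
    {A : Matrix ι ι R} (hA : A.IsSymm) (x y : ι → R) : x ⬝ᵥ A *ᵥ y = y ⬝ᵥ A *ᵥ x := by
  rw [dotProduct_mulVec, ← mulVec_transpose, hA.eq, dotProduct_comm]

section

variable {ι : Type*} [Fintype ι]

theorem Matrix.IsSymm.dotProduct_mulVec_le_of_abs_quadratic_le {A : Matrix ι ι ℝ} (hA : A.IsSymm)
    {lam : ℝ} (hspec : ∀ p : ι → ℝ, ∑ i, p i = 0 → |p ⬝ᵥ A *ᵥ p| ≤ lam * ∑ i, p i ^ 2)
    {x y : ι → ℝ} (hx : ∑ i, x i = 0) (hy : ∑ i, y i = 0) :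
    x ⬝ᵥ A *ᵥ y ≤ lam / 2 * (∑ i, x i ^ 2 + ∑ i, y i ^ 2) := by
  have hplus := (abs_le.mp (hspec (x + y) (by simp [sum_add_distrib, hx, hy]))).2
  have hminus := (abs_le.mp (hspec (x - y) (by simp [sum_sub_distrib, hx, hy]))).1
  have hpolar : (x + y) ⬝ᵥ A *ᵥ (x + y) - (x - y) ⬝ᵥ A *ᵥ (x - y) = 4 * (x ⬝ᵥ A *ᵥ y) := by
    simp only [mulVec_add, mulVec_sub, add_dotProduct, sub_dotProduct, dotProduct_add,
      dotProduct_sub, hA.dotProduct_mulVec_comm y x]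
    ring
  have hparallelogram :
      ∑ i, (x + y) i ^ 2 + ∑ i, (x - y) i ^ 2 = 2 * (∑ i, x i ^ 2 + ∑ i, y i ^ 2) := by
    simp only [Pi.add_apply, Pi.sub_apply, ← sum_add_distrib, mul_add, mul_sum]
    exact sum_congr rfl fun i _ => by ring
  linear_combination (hplus + hminus - hpolar + lam * hparallelogram) / 4

theorem indicator_one_dotProduct (s : Finset ι) (v : ι → ℝ) :
    (s : Set ι).indicator 1 ⬝ᵥ v = ∑ i ∈ s, v i := by
  classical
  simp [dotProduct, Set.indicator_apply]

theorem natCast_card_mul_card_div_card (s : Finset ι) :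
    (Fintype.card ι : ℝ) * (#s / Fintype.card ι) = #s := by
  rcases eq_or_ne (Fintype.card ι) 0 with hn | hn
  · have : #s = 0 := Nat.eq_zero_of_le_zero (hn ▸ card_le_univ s)
    simp [hn, this]
  · exact mul_div_cancel₀ _ (by exact_mod_cast hn)

noncomputable def centeredIndicator (s : Finset ι) : ι → ℝ :=
  (s : Set ι).indicator 1 - (#s / Fintype.card ι : ℝ) • 1

theorem sum_centeredIndicator (s : Finset ι) : ∑ i, centeredIndicator s i = 0 := by
  classical
  simp [centeredIndicator, Set.indicator_apply, sum_sub_distrib, natCast_card_mul_card_div_card]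

theorem sum_centeredIndicator_sq_le (s : Finset ι) : ∑ i, centeredIndicator s i ^ 2 ≤ #s := by
  classical
  set c : ℝ := #s / Fintype.card ι
  have hsq (i : ι) :
      centeredIndicator s i ^ 2 = (s : Set ι).indicator 1 i * (1 - 2 * c) + c ^ 2 := by
    by_cases hi : i ∈ s
    · simp [centeredIndicator, c, hi]; ring
    · simp [centeredIndicator, c, hi]
  have hs := natCast_card_mul_card_div_card s
  have hc : 0 ≤ c := by positivity
  simp only [hsq, sum_add_distrib, ← sum_mul, sum_const, card_univ, nsmul_eq_mul]
  simp only [Set.indicator_apply, SetLike.mem_coe, Pi.one_apply, sum_ite_mem, univ_inter,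
    sum_const, nsmul_eq_mul, mul_one]
  nlinarith

theorem Matrix.IsSymm.centeredIndicator_dotProduct_mulVec {A : Matrix ι ι ℝ} (hA : A.IsSymm) {d : ℝ}
    (hrow : A *ᵥ 1 = d • 1) (s t : Finset ι) :
    centeredIndicator s ⬝ᵥ A *ᵥ centeredIndicator t =
      (s : Set ι).indicator 1 ⬝ᵥ A *ᵥ (t : Set ι).indicator 1 - d * #s * #t / Fintype.card ι := by
  have hone : (1 : ι → ℝ) ⬝ᵥ A *ᵥ (t : Set ι).indicator 1 = d * #t := by
    rw [hA.dotProduct_mulVec_comm, hrow, indicator_one_dotProduct]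
    simp [mul_comm]
  simp only [centeredIndicator, mulVec_sub, mulVec_smul, hrow, sub_dotProduct, dotProduct_sub,
    smul_dotProduct, dotProduct_smul, hone, indicator_one_dotProduct s 1, Pi.one_apply, sum_const,
    nsmul_one, one_dotProduct_one, smul_eq_mul]
  linear_combination (#t / Fintype.card ι * d : ℝ) * natCast_card_mul_card_div_card s

theorem Matrix.IsSymm.indicator_one_dotProduct_mulVec_sub_le {A : Matrix ι ι ℝ} (hA : A.IsSymm)
    {d lam : ℝ} (hrow : A *ᵥ 1 = d • 1)
    (hspec : ∀ p : ι → ℝ, ∑ i, p i = 0 → |p ⬝ᵥ A *ᵥ p| ≤ lam * ∑ i, p i ^ 2) (hlam : 0 ≤ lam)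
    (s t : Finset ι) :
    (s : Set ι).indicator 1 ⬝ᵥ A *ᵥ (t : Set ι).indicator 1 - d * #s * #t / Fintype.card ι ≤
      lam / 2 * (#s + #t) := by
  rw [← hA.centeredIndicator_dotProduct_mulVec hrow]
  calc _ ≤ lam / 2 * (∑ i, centeredIndicator s i ^ 2 + ∑ i, centeredIndicator t i ^ 2) :=
        hA.dotProduct_mulVec_le_of_abs_quadratic_le hspec (sum_centeredIndicator s)
          (sum_centeredIndicator t)
    _ ≤ lam / 2 * (#s + #t) := by
        gcongr <;> apply sum_centeredIndicator_sq_le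

end

namespace SimpleGraph

variable {V : Type*} [Fintype V] (G : SimpleGraph V) [DecidableRel G.Adj]

def neighborhoodFinset (B : Finset V) : Finset V :=
  univ.filter fun v => ∃ u ∈ B, G.Adj u v

theorem indicator_one_dotProduct_adjMatrix_mulVec_neighborhoodFinset (B : Finset V) :
    (B : Set V).indicator 1 ⬝ᵥ G.adjMatrix ℝ *ᵥ (G.neighborhoodFinset B : Set V).indicator 1 =
      ∑ u ∈ B, (G.degree u : ℝ) := by
  rw [indicator_one_dotProduct]
  refine sum_congr rfl fun u hu => ?_
  have hnbr (v : V) (hv : v ∈ G.neighborFinset u) :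
      (G.neighborhoodFinset B : Set V).indicator (1 : V → ℝ) v = 1 := by
    refine Set.indicator_of_mem ?_ _
    simpa [neighborhoodFinset] using ⟨u, hu, (G.mem_neighborFinset u v).mp hv⟩
  rw [adjMatrix_mulVec_apply, sum_congr rfl hnbr, sum_const, card_neighborFinset_eq_degree,
    nsmul_one]

end SimpleGraph

theorem expander_small_set_neighborhood_general {U : Type*} [Fintype U]
    (H : SimpleGraph U) [DecidableRel H.Adj]
    (d : ℕ) (hreg : H.IsRegularOfDegree d) (lam : ℝ)
    (hspec : ∀ p : U → ℝ, ∑ i, p i = 0 →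
      abs (p ⬝ᵥ (H.adjMatrix ℝ *ᵥ p)) ≤ lam * ∑ i, (p i) ^ 2)
    (hlam0 : 0 < lam) (hlam : lam < (d : ℝ) / 4)
    (B : Finset U)
    (hB : (B.card : ℝ) ≤ (lam / d) * (Fintype.card U : ℝ)) :
    ((d : ℝ) / (2 * lam)) * (B.card : ℝ) ≤
      ((Finset.univ.filter fun v => ∃ u ∈ B, H.Adj u v).card : ℝ) := by
  change _ ≤ (#(H.neighborhoodFinset B) : ℝ)
  set N := H.neighborhoodFinset B
  have hd : (0 : ℝ) < d := by linarith
  have hrow : H.adjMatrix ℝ *ᵥ 1 = (d : ℝ) • 1 := by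
    ext v
    simpa using H.adjMatrix_mulVec_const_apply_of_regular hreg (a := (1 : ℝ)) (v := v)
  have hmix := H.isSymm_adjMatrix.indicator_one_dotProduct_mulVec_sub_le hrow hspec hlam0.le B N
  rw [H.indicator_one_dotProduct_adjMatrix_mulVec_neighborhoodFinset] at hmix
  simp only [hreg.degree_eq, sum_const, nsmul_eq_mul] at hmix
  have hdB : d * #B ≤ lam * Fintype.card U := by
    rwa [div_mul_eq_mul_div, le_div_iff₀ hd, mul_comm] at hB
  have hsmall : d * #B * #N / Fintype.card U ≤ lam * #N :=
    div_le_of_le_mul₀ (by positivity) (by positivity) (by nlinarith)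
  have hbalance : (d : ℝ) * #B ≤ lam / 2 * #B + 3 * lam / 2 * #N := by linarith
  rw [div_mul_eq_mul_div, div_le_iff₀ (by positivity)]
  nlinarith [mul_le_mul_of_nonneg_right hlam.le (Nat.cast_nonneg (α := ℝ) #B)]

/-- Let `H` be a `d`-regular graph on `n` vertices whose adjacency matrix satisfies
`|pᵀ A_H p| ≤ λ‖p‖²` for every `p` orthogonal to the all-ones vector, with `0 < λ < d/4`.
If `B` is a nonempty set of vertices with `|B| ≤ (λ/d)·n`, then its neighborhood satisfies
`|N(B)| ≥ (d/(2λ))·|B|`. -/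
theorem expander_small_set_neighborhood {U : Type*} [Fintype U] [DecidableEq U]
    (H : SimpleGraph U) [DecidableRel H.Adj]
    (d : ℕ) (hreg : H.IsRegularOfDegree d) (lam : ℝ)
    (hspec : ∀ p : U → ℝ, ∑ i, p i = 0 →
      abs (p ⬝ᵥ (H.adjMatrix ℝ *ᵥ p)) ≤ lam * ∑ i, (p i) ^ 2)
    (hlam0 : 0 < lam) (hlam : lam < (d : ℝ) / 4)
    (B : Finset U) (hBne : B.Nonempty)
    (hB : (B.card : ℝ) ≤ (lam / d) * (Fintype.card U : ℝ)) :
    ((d : ℝ) / (2 * lam)) * (B.card : ℝ) ≤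
      ((Finset.univ.filter fun v => ∃ u ∈ B, H.Adj u v).card : ℝ) :=
  expander_small_set_neighborhood_general H d hreg lam hspec hlam0 hlam B hB
end
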